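/- For every integer n ≥ 31: if n is odd, then for each m ∈ {(n+1)/2, (n+3)/2, (n+5)/2} there exists a partition p of n with λ(p) = m; if n is even, then for each m ∈ {(n−2)/2, n/2, (n+2)/2} there exists a partition p of n with λ(p) = m. -/

import Mathlib

/-- `λ(p) = (1/2)·Σ_{j=1}^k n_j·(n_j − 2j + 1)` for a finite sequence of naturals. -/
def transLam (L : List ℕ) : ℚ :=
  (∑ j ∈ Finset.range L.length,
    (L.getD j 0 : ℚ) * ((L.getD j 0 : ℚ) - 2 * ((j : ℚ) + 1) + 1)) / 2

/-- A partition of `n`: a nonincreasing list of positive integers summing to `n`. -/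
def IsPartitionOf (n : ℕ) (L : List ℕ) : Prop :=
  L.Pairwise (· ≥ ·) ∧ (∀ x ∈ L, 0 < x) ∧ L.sum = n

/-!
`λ(p)` is the content sum `Σ (j − i)` over the cells `(i, j)` of the Young diagram of `p`.
Every witness below has the shape `(r + a, c₂, …, c_k, 1^(r + b))` with a fixed core and
`a = k + b + 1`. Passing from `r` to `r + 1` adds the cell `(1, r + a + 1)` of content `r + a` and
the cell `(k + r + b + 1, 1)` of content `−(k + r + b)`, so `n` grows by 2 and `λ` by exactly 1;
it remains to pick, for each of the six residue cases, a core that is right at `n = 31` or `32`.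
-/

lemma sum_range_getD (L : List ℕ) :
    ∑ j ∈ Finset.range L.length, (L.getD j 0 : ℚ) = L.sum := by
  induction L with
  | nil => simp
  | cons x L ih =>
    rw [List.length_cons, Finset.sum_range_succ']
    simp only [List.getD_cons_succ, List.getD_cons_zero, ih, List.sum_cons, Nat.cast_add]
    exact add_comm _ _

@[simp]
lemma transLam_nil : transLam [] = 0 := by
  simp [transLam]

@[simp]
lemma transLam_cons (x : ℕ) (L : List ℕ) :
    transLam (x :: L) = (x : ℚ) * (x - 1) / 2 - L.sum + transLam L := by
  unfold transLam
  rw [List.length_cons, Finset.sum_range_succ', ← sum_range_getD]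
  simp only [List.getD_cons_succ, List.getD_cons_zero, Nat.cast_add, Nat.cast_one,
    Nat.cast_zero]
  have hshift : ∑ j ∈ Finset.range L.length,
      (L.getD j 0 : ℚ) * ((L.getD j 0 : ℚ) - 2 * ((j : ℚ) + 1 + 1) + 1) =
      ∑ j ∈ Finset.range L.length, (L.getD j 0 : ℚ) * ((L.getD j 0 : ℚ) - 2 * ((j : ℚ) + 1) + 1)
        - 2 * ∑ j ∈ Finset.range L.length, (L.getD j 0 : ℚ) := by
    rw [Finset.mul_sum, ← Finset.sum_sub_distrib]
    refine Finset.sum_congr rfl fun j _ => ?_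
    ring
  rw [hshift]
  ring

@[simp]
lemma transLam_replicate_one (t : ℕ) :
    transLam (List.replicate t 1) = -((t : ℚ) * (t - 1) / 2) := by
  induction t with
  | zero => simp
  | succ t ih =>
    rw [List.replicate_succ, transLam_cons, ih, List.sum_replicate, smul_eq_mul, mul_one]
    push_cast
    ring

lemma isPartitionOf_append_replicate_one {n : ℕ} (F : List ℕ) (t : ℕ)
    (hF : F.Pairwise (· ≥ ·)) (hpos : ∀ x ∈ F, 0 < x) (hsum : F.sum + t = n) :
    IsPartitionOf n (F ++ List.replicate t 1) := by
  refine ⟨List.pairwise_append.2 ⟨hF, ?_, ?_⟩, ?_, ?_⟩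
  · exact List.pairwise_replicate.2 (Or.inr le_rfl)
  · intro x hx y hy
    rw [List.eq_of_mem_replicate hy]
    exact hpos x hx
  · intro x hx
    rcases List.mem_append.1 hx with hx | hx
    · exact hpos x hx
    · rw [List.eq_of_mem_replicate hx]
      exact one_pos
  · simpa using hsum

theorem set_A1_in_spectrum (n : ℕ) (hn : 31 ≤ n) (m : ℕ)
    (h : (Odd n ∧ (2 * m = n + 1 ∨ 2 * m = n + 3 ∨ 2 * m = n + 5)) ∨
         (Even n ∧ (2 * m = n - 2 ∨ 2 * m = n ∨ 2 * m = n + 2))) :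
    ∃ L : List ℕ, IsPartitionOf n L ∧ transLam L = (m : ℚ) := by
  have witness : ∀ (F : List ℕ) (t : ℕ), F.Pairwise (· ≥ ·) → (∀ x ∈ F, 0 < x) →
      F.sum + t = n → transLam (F ++ List.replicate t 1) = m →
      ∃ L : List ℕ, IsPartitionOf n L ∧ transLam L = (m : ℚ) :=
    fun F t hF hpos hsum hlam =>
      ⟨_, isPartitionOf_append_replicate_one F t hF hpos hsum, hlam⟩
  rcases h with ⟨⟨k, hk⟩, hm⟩ | ⟨⟨k, hk⟩, hm⟩
  · obtain ⟨r, rfl⟩ : ∃ r, n = 2 * r + 31 := ⟨k - 15, by omega⟩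
    rcases hm with hm | hm | hm
    · obtain rfl : m = r + 16 := by omega
      refine witness [r + 10, 7, 4, 3, 3] (r + 4) ?_ ?_ ?_ ?_ <;> simp <;> first | omega | ring
    · obtain rfl : m = r + 17 := by omega
      refine witness [r + 15, 4] (r + 12) ?_ ?_ ?_ ?_ <;> simp <;> first | omega | ring
    · obtain rfl : m = r + 18 := by omega
      refine witness [r + 14, 5, 2] (r + 10) ?_ ?_ ?_ ?_ <;> simp <;> first | omega | ring
  · obtain ⟨r, rfl⟩ : ∃ r, n = 2 * r + 32 := ⟨k - 16, by omega⟩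
    rcases hm with hm | hm | hm
    · obtain rfl : m = r + 15 := by omega
      refine witness [r + 8, 8, 5, 4, 3, 3] (r + 1) ?_ ?_ ?_ ?_ <;> simp <;> first | omega | ring
    · obtain rfl : m = r + 16 := by omega
      refine witness [r + 17] (r + 15) ?_ ?_ ?_ ?_ <;> simp <;> first | omega | ring
    · obtain rfl : m = r + 17 := by omega
      refine witness [r + 10, 8, 3, 3, 3, 2] (r + 3) ?_ ?_ ?_ ?_ <;> simp <;> first | omega | ring
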